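/- arXiv:1801.04548 — 2 statements merged into one kernel-verified Lean document; each statement's English description precedes it below -/
import Mathlib

section
/- For any m-by-n complex matrix F with unit-norm columns, the sum (1/n)·Σ_{i≠j}|⟨f_i,f_j⟩|⁴ is at least x²/(n−1) where x = n/m − 1, with equality if and only if F is an equiangular tight frame. -/
open Matrix BigOperators Finset

/-!
Write `G = Fᴴ F` and `A = F Fᴴ`; both have squared Frobenius norm `tr (Fᴴ F Fᴴ F)`. Since `G` has
unit diagonal, the off-diagonal mass `S = ∑_{i ≠ j} |G i j|²` equals `‖A‖² - n`, and
`‖A‖² ≥ (tr A)² / m = n² / m` with equality iff `A` is a multiple of the identity: this is the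
Welch bound `S ≥ n x`. The power-mean inequality over the `n (n - 1)` off-diagonal pairs gives
`∑_{i ≠ j} |G i j|⁴ ≥ S² / (n (n - 1))`, with equality iff all `|G i j|²` coincide. Chaining the
two yields the bound, and equality holds iff both steps are tight, i.e. iff `F` is an ETF.
-/

namespace Finset

variable {α : Type*}

theorem sum_sq_sub_mean (s : Finset α) (a : α → ℝ) :
    ∑ p ∈ s, (a p - (∑ q ∈ s, a q) / #s) ^ 2 = ∑ p ∈ s, a p ^ 2 - (∑ p ∈ s, a p) ^ 2 / #s := by
  obtain rfl | hs := s.eq_empty_or_nonempty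
  · simp
  have hcard : (#s : ℝ) ≠ 0 := by positivity
  simp only [sub_sq, sum_add_distrib, sum_sub_distrib, ← sum_mul, ← mul_sum, sum_const,
    nsmul_eq_mul]
  field_simp
  ring

theorem sq_sum_div_card_le_sum_sq (s : Finset α) (a : α → ℝ) :
    (∑ p ∈ s, a p) ^ 2 / #s ≤ ∑ p ∈ s, a p ^ 2 := by
  have := s.sum_sq_sub_mean a
  linarith [sum_nonneg fun p (_ : p ∈ s) => sq_nonneg (a p - (∑ q ∈ s, a q) / #s)]

theorem sum_sq_eq_sq_sum_div_card_iff (s : Finset α) (a : α → ℝ) :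
    ∑ p ∈ s, a p ^ 2 = (∑ p ∈ s, a p) ^ 2 / #s ↔ ∀ p ∈ s, a p = (∑ q ∈ s, a q) / #s := by
  rw [← sub_eq_zero, ← sum_sq_sub_mean, sum_eq_zero_iff_of_nonneg fun _ _ => sq_nonneg _]
  simp only [sq_eq_zero_iff, sub_eq_zero]

theorem sum_sum_erase_eq_sum_offDiag {M : Type*} [DecidableEq α] [AddCommMonoid M]
    (s : Finset α) (f : α → α → M) :
    ∑ i ∈ s, ∑ j ∈ s.erase i, f i j = ∑ p ∈ s.offDiag, f p.1 p.2 := by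
  have : s.offDiag = (s ×ˢ s).filter fun p => p.1 ≠ p.2 := by
    ext; simp [and_assoc]
  rw [this, sum_filter, sum_product]
  refine sum_congr rfl fun i _ => ?_
  rw [← sum_filter, filter_ne]

theorem cast_card_offDiag {R : Type*} [DecidableEq α] [Ring R] (s : Finset α) :
    (#s.offDiag : R) = #s * (#s - 1) := by
  rw [offDiag_card, Nat.cast_sub (Nat.le_mul_self _), Nat.cast_mul, mul_sub_one]

end Finset

section OffDiagonal

variable {κ : Type*} [Fintype κ] [DecidableEq κ]

theorem sq_sum_offDiag_div_le_sum_sq (f : κ → κ → ℝ) :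
    (∑ i, ∑ j ∈ univ.erase i, f i j) ^ 2 / (Fintype.card κ * (Fintype.card κ - 1)) ≤
      ∑ i, ∑ j ∈ univ.erase i, f i j ^ 2 := by
  simpa only [sum_sum_erase_eq_sum_offDiag, cast_card_offDiag, card_univ] using
    sq_sum_div_card_le_sum_sq univ.offDiag fun p => f p.1 p.2

theorem sum_offDiag_sq_eq_iff (f : κ → κ → ℝ) :
    ∑ i, ∑ j ∈ univ.erase i, f i j ^ 2 =
        (∑ i, ∑ j ∈ univ.erase i, f i j) ^ 2 / (Fintype.card κ * (Fintype.card κ - 1)) ↔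
      ∀ i j, i ≠ j →
        f i j = (∑ i, ∑ j ∈ univ.erase i, f i j) / (Fintype.card κ * (Fintype.card κ - 1)) := by
  simpa only [sum_sum_erase_eq_sum_offDiag, cast_card_offDiag, card_univ, mem_offDiag, mem_univ,
    true_and, Prod.forall] using sum_sq_eq_sq_sum_div_card_iff univ.offDiag fun p => f p.1 p.2

end OffDiagonal

namespace Matrix

variable {𝕜 ι κ : Type*} [RCLike 𝕜] [Fintype ι] [Fintype κ]

theorem re_trace_mul_conjTranspose_self (A : Matrix ι κ 𝕜) :
    RCLike.re (A * Aᴴ).trace = ∑ i, ∑ j, ‖A i j‖ ^ 2 := by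
  simp [trace, mul_apply, RCLike.mul_conj]

theorem sum_norm_sq_conjTranspose_mul_self (F : Matrix ι κ 𝕜) :
    ∑ i, ∑ j, ‖(Fᴴ * F) i j‖ ^ 2 = ∑ i, ∑ j, ‖(F * Fᴴ) i j‖ ^ 2 := by
  rw [← re_trace_mul_conjTranspose_self, ← re_trace_mul_conjTranspose_self,
    conjTranspose_mul, conjTranspose_conjTranspose, conjTranspose_mul, conjTranspose_conjTranspose,
    Matrix.mul_assoc, trace_mul_comm, Matrix.mul_assoc, Matrix.mul_assoc, ← Matrix.mul_assoc F]

theorem sum_norm_sq_eq_zero_iff (A : Matrix ι κ 𝕜) :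
    ∑ i, ∑ j, ‖A i j‖ ^ 2 = 0 ↔ A = 0 := by
  rw [← Matrix.ext_iff, sum_eq_zero_iff_of_nonneg fun i _ => sum_nonneg fun j _ => by positivity]
  simp [sum_eq_zero_iff_of_nonneg]

variable [DecidableEq ι]

theorem sum_norm_sq_sub_smul_one (A : Matrix ι ι 𝕜) (c : ℝ) :
    ∑ i, ∑ j, ‖(A - (c : 𝕜) • 1) i j‖ ^ 2 =
      ∑ i, ∑ j, ‖A i j‖ ^ 2 - 2 * c * RCLike.re A.trace + Fintype.card ι * c ^ 2 := by
  have entry : ∀ i j, ‖(A - (c : 𝕜) • 1) i j‖ ^ 2 =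
      ‖A i j‖ ^ 2 - if i = j then 2 * c * RCLike.re (A i i) - c ^ 2 else 0 := by
    intro i j
    rw [sub_apply, smul_apply, one_apply, smul_eq_mul]
    split_ifs with h
    · subst h
      simp only [RCLike.norm_sq_eq_def, mul_one, map_sub, RCLike.ofReal_re, RCLike.ofReal_im]
      ring
    · simp
  simp only [entry, sum_sub_distrib, sum_ite_eq, mem_univ, if_true, trace, diag_apply,
    map_sum, mul_sum, sum_const, card_univ, nsmul_eq_mul]
  ring

theorem sum_norm_sq_sub_mean_trace_smul_one (A : Matrix ι ι 𝕜) :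
    ∑ i, ∑ j, ‖(A - ((RCLike.re A.trace / Fintype.card ι : ℝ) : 𝕜) • 1) i j‖ ^ 2 =
      ∑ i, ∑ j, ‖A i j‖ ^ 2 - RCLike.re A.trace ^ 2 / Fintype.card ι := by
  rw [sum_norm_sq_sub_smul_one]
  rcases eq_or_ne (Fintype.card ι : ℝ) 0 with h | h
  · simp [h]
  · field_simp
    ring

theorem sq_re_trace_div_card_le_sum_norm_sq (A : Matrix ι ι 𝕜) :
    RCLike.re A.trace ^ 2 / Fintype.card ι ≤ ∑ i, ∑ j, ‖A i j‖ ^ 2 := by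
  have := sum_norm_sq_sub_mean_trace_smul_one A
  linarith [sum_nonneg fun i (_ : i ∈ univ) => sum_nonneg fun j (_ : j ∈ univ) =>
    sq_nonneg ‖(A - ((RCLike.re A.trace / Fintype.card ι : ℝ) : 𝕜) • 1) i j‖]

theorem sum_norm_sq_eq_sq_re_trace_div_card_iff (A : Matrix ι ι 𝕜) :
    ∑ i, ∑ j, ‖A i j‖ ^ 2 = RCLike.re A.trace ^ 2 / Fintype.card ι ↔
      A = ((RCLike.re A.trace / Fintype.card ι : ℝ) : 𝕜) • 1 := by
  rw [← sub_eq_zero, ← sum_norm_sq_sub_mean_trace_smul_one, sum_norm_sq_eq_zero_iff, sub_eq_zero]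

end Matrix

section Frame

variable {𝕜 ι κ : Type*} [RCLike 𝕜] [Fintype ι] [Fintype κ] {F : Matrix ι κ 𝕜}

theorem re_trace_mul_conjTranspose_of_unit_columns (hcol : ∀ j, (Fᴴ * F) j j = 1) :
    RCLike.re (F * Fᴴ).trace = Fintype.card κ := by
  rw [trace_mul_comm]
  simp [trace, hcol]

variable [DecidableEq κ]

theorem sum_offDiag_norm_sq_gram_of_unit_columns (hcol : ∀ j, (Fᴴ * F) j j = 1) :
    ∑ i, ∑ j ∈ univ.erase i, ‖(Fᴴ * F) i j‖ ^ 2 =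
      ∑ i, ∑ j, ‖(F * Fᴴ) i j‖ ^ 2 - Fintype.card κ := by
  have row : ∀ i, ∑ j, ‖(Fᴴ * F) i j‖ ^ 2 = 1 + ∑ j ∈ univ.erase i, ‖(Fᴴ * F) i j‖ ^ 2 :=
    fun i => by rw [← add_sum_erase _ _ (mem_univ i), hcol, norm_one, one_pow]
  rw [← sum_norm_sq_conjTranspose_mul_self]
  simp only [row, sum_add_distrib, sum_const, card_univ, nsmul_one]
  ring

variable [DecidableEq ι]

theorem welch_bound (hcol : ∀ j, (Fᴴ * F) j j = 1) :
    (Fintype.card κ : ℝ) ^ 2 / Fintype.card ι - Fintype.card κ ≤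
      ∑ i, ∑ j ∈ univ.erase i, ‖(Fᴴ * F) i j‖ ^ 2 := by
  have := sq_re_trace_div_card_le_sum_norm_sq (F * Fᴴ)
  rw [re_trace_mul_conjTranspose_of_unit_columns hcol] at this
  rw [sum_offDiag_norm_sq_gram_of_unit_columns hcol]
  linarith

theorem welch_bound_eq_iff (hcol : ∀ j, (Fᴴ * F) j j = 1) :
    ∑ i, ∑ j ∈ univ.erase i, ‖(Fᴴ * F) i j‖ ^ 2 =
        (Fintype.card κ : ℝ) ^ 2 / Fintype.card ι - Fintype.card κ ↔
      F * Fᴴ = ((Fintype.card κ / Fintype.card ι : ℝ) : 𝕜) • 1 := by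
  have := sum_norm_sq_eq_sq_re_trace_div_card_iff (F * Fᴴ)
  rw [re_trace_mul_conjTranspose_of_unit_columns hcol] at this
  rw [sum_offDiag_norm_sq_gram_of_unit_columns hcol, sub_left_inj, this]

end Frame

theorem eq_sq_div_iff_of_le {a S Q k : ℝ} (ha : 0 ≤ a) (haS : a ≤ S) (hSQ : S ^ 2 / k ≤ Q)
    (hk : 0 < k) : Q = a ^ 2 / k ↔ S = a ∧ Q = S ^ 2 / k := by
  constructor
  · intro hQ
    have hSa : S ^ 2 ≤ a ^ 2 := by
      rw [hQ] at hSQ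
      exact (div_le_div_iff_of_pos_right hk).1 hSQ
    have hS : S = a := le_antisymm ((pow_le_pow_iff_left₀ (ha.trans haS) ha two_ne_zero).1 hSa) haS
    exact ⟨hS, hS ▸ hQ⟩
  · rintro ⟨rfl, hQ⟩
    exact hQ

theorem erasure_welch_stmt8 (m n : ℕ) (hm : 1 ≤ m) (hmn : m < n)
    (F : Matrix (Fin m) (Fin n) ℂ)
    (hcol : ∀ i, (Fᴴ * F) i i = 1) :
    let x : ℝ := (n : ℝ) / m - 1
    (x ^ 2 / ((n : ℝ) - 1) ≤
      (1 / (n : ℝ)) * ∑ i, ∑ j ∈ Finset.univ.erase i, ‖(Fᴴ * F) i j‖ ^ 4) ∧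
    ((1 / (n : ℝ)) * ∑ i, ∑ j ∈ Finset.univ.erase i, ‖(Fᴴ * F) i j‖ ^ 4 =
        x ^ 2 / ((n : ℝ) - 1) ↔
      (F * Fᴴ = ((n : ℂ) / (m : ℂ)) • (1 : Matrix (Fin m) (Fin m) ℂ) ∧
        ∀ i j, i ≠ j →
          ‖(Fᴴ * F) i j‖ ^ 2 = ((n : ℝ) - m) / (((n : ℝ) - 1) * m))) := by
  intro x
  set G := Fᴴ * F
  set S := ∑ i, ∑ j ∈ univ.erase i, ‖G i j‖ ^ 2
  have hn : (1 : ℝ) < n := by exact_mod_cast hm.trans_lt hmn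
  have hm0 : (0 : ℝ) < m := by exact_mod_cast hm
  have hk : (0 : ℝ) < n * (n - 1) := mul_pos (by linarith) (by linarith)
  have hnx : (n : ℝ) ^ 2 / m - n = n * x := by simp only [x]; field_simp
  have hx : 0 ≤ (n : ℝ) * x := by
    have : 1 ≤ (n : ℝ) / m := by rw [le_div_iff₀ hm0]; exact_mod_cast by omega
    exact mul_nonneg (by positivity) (by simp only [x]; linarith)
  have hS : n * x ≤ S := by simpa only [Fintype.card_fin, hnx] using welch_bound hcol
  have hS_iff : S = n * x ↔ F * Fᴴ = ((n : ℂ) / m) • 1 := by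
    simpa only [Fintype.card_fin, hnx, RCLike.ofReal_div, RCLike.ofReal_natCast] using
      welch_bound_eq_iff hcol
  have hQ := sq_sum_offDiag_div_le_sum_sq fun i j => ‖G i j‖ ^ 2
  have hQ_iff := sum_offDiag_sq_eq_iff fun i j => ‖G i j‖ ^ 2
  simp only [← pow_mul, Fintype.card_fin] at hQ hQ_iff
  have hQn : ∀ Q : ℝ, 1 / n * Q = x ^ 2 / (n - 1) ↔ Q = (n * x) ^ 2 / (n * (n - 1)) := by
    intro Q; field_simp
  have hc : S = n * x → S / (n * (n - 1)) = (n - m) / ((n - 1) * m) := by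
    intro h; rw [h]; simp only [x]; field_simp
  refine ⟨?_, ?_⟩
  · rw [← (hQn _).2 rfl]
    gcongr
    exact le_trans (by gcongr) hQ
  · rw [hQn, eq_sq_div_iff_of_le hx hS hQ hk]
    constructor
    · rintro ⟨hSx, hQS⟩
      exact ⟨hS_iff.1 hSx, fun i j hij => (hQ_iff.1 hQS i j hij).trans (hc hSx)⟩
    · rintro ⟨hA, hG⟩
      have hSx := hS_iff.2 hA
      exact ⟨hSx, hQ_iff.2 fun i j hij => (hG i j hij).trans (hc hSx).symm⟩
end

section
/- Let k = pn with 0 < p ≤ 1 and let F be an m-by-n unit-norm frame. Then the normalized expected cross-correlation I²_rms(FP) = (m₂/p − 1)/(k − 1) satisfies I²_rms(FP) ≥ (k/m − k/n)/(k − 1), where m₂ = (1/n)E[tr((FPF')²)] and P = diag of i.i.d. Bernoulli(p). -/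
open Matrix BigOperators Finset

/-- Probability weight of a Bernoulli(p) selection pattern `ε`. -/
noncomputable def berWeight (n : ℕ) (p : ℝ) (ε : Fin n → Bool) : ℝ :=
  ∏ i, if ε i then p else 1 - p

/-- The diagonal 0/1 selection matrix `P` determined by `ε`. -/
noncomputable def selMat (n : ℕ) (ε : Fin n → Bool) : Matrix (Fin n) (Fin n) ℂ :=
  Matrix.diagonal (fun i => if ε i then (1 : ℂ) else 0)

/-- Expected `d`-th moment `(1/n)·E[tr((FPF')^d)]` of a Bernoulli(p) subframe. -/
noncomputable def expMoment (m n : ℕ) (p : ℝ) (F : Matrix (Fin m) (Fin n) ℂ)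
    (d : ℕ) : ℝ :=
  (1 / (n : ℝ)) *
    ∑ ε : Fin n → Bool, berWeight n p ε *
      (Matrix.trace ((F * selMat n ε * Fᴴ) ^ d)).re

/-!
With `G = FᴴF` and `P = diag ε`, cycling the trace gives `tr((FPFᴴ)²) = ∑ᵢⱼ εᵢ εⱼ |Gᵢⱼ|²`, and
`E[εᵢ εⱼ]` is `p` on the diagonal and `p²` off it. For unit columns this yields
`n·m₂ = p²·∑ᵢⱼ |Gᵢⱼ|² + (p - p²)·n`, so the claim reduces to the Welch bound `∑ᵢⱼ |Gᵢⱼ|² ≥ n²/m`.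
That bound holds because `∑ᵢⱼ |Gᵢⱼ|² = ∑ₐᵦ |(FFᴴ)ₐᵦ|² ≥ ∑ₐ (FFᴴ)ₐₐ²`, which by Cauchy–Schwarz is
at least `(tr FFᴴ)²/m = (tr G)²/m = n²/m`.
-/

open Complex (normSq)

section Bernoulli

variable {n : ℕ} (p : ℝ)

theorem sum_berWeight_mul_prod_indicator (s : Finset (Fin n)) :
    ∑ ε : Fin n → Bool, berWeight n p ε * ∏ i ∈ s, (if ε i then (1 : ℝ) else 0) =
      p ^ s.card := by
  calc ∑ ε : Fin n → Bool, berWeight n p ε * ∏ i ∈ s, (if ε i then (1 : ℝ) else 0)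
      = ∑ ε : Fin n → Bool, ∏ i, (if ε i then p else 1 - p) *
          (if i ∈ s then (if ε i then 1 else 0) else 1) := by
        refine sum_congr rfl fun ε _ => ?_
        rw [berWeight, ← prod_ite_mem_eq s (fun i => if ε i then (1 : ℝ) else 0),
          ← prod_mul_distrib]
    _ = ∏ i, ∑ b : Bool, (if b then p else 1 - p) *
          (if i ∈ s then (if b then 1 else 0) else 1) := by
        rw [Fintype.prod_sum]
    _ = ∏ i, if i ∈ s then p else 1 := by
        refine prod_congr rfl fun i _ => ?_
        split_ifs <;> simp
    _ = p ^ s.card := by rw [prod_ite_mem_eq, prod_const]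

theorem sum_berWeight_mul_indicator_mul_indicator (i j : Fin n) :
    ∑ ε : Fin n → Bool, berWeight n p ε *
        ((if ε i then (1 : ℝ) else 0) * (if ε j then 1 else 0)) =
      if i = j then p else p ^ 2 := by
  split_ifs with hij
  · subst hij
    have hidem (b : Bool) :
        ((if b then (1 : ℝ) else 0) * if b then 1 else 0) = if b then 1 else 0 := by
      cases b <;> simp
    simpa [hidem] using sum_berWeight_mul_prod_indicator p {i}
  · simpa [prod_pair hij, card_pair hij] using sum_berWeight_mul_prod_indicator p {i, j}

end Bernoulli

section Gram

variable {m ι : Type*} [Fintype m] [Fintype ι]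

def framePotential (F : Matrix m ι ℂ) : ℝ :=
  ∑ i, ∑ j, normSq ((Fᴴ * F) i j)

theorem framePotential_nonneg (F : Matrix m ι ℂ) : 0 ≤ framePotential F :=
  sum_nonneg fun _ _ => sum_nonneg fun _ _ => Complex.normSq_nonneg _

theorem re_trace_mul_conjTranspose {α β : Type*} [Fintype α] [Fintype β] (M : Matrix α β ℂ) :
    (trace (M * Mᴴ)).re = ∑ a, ∑ b, normSq (M a b) := by
  simp only [trace, diag_apply, mul_apply, conjTranspose_apply, Complex.re_sum,
    RCLike.star_def, Complex.mul_conj, Complex.ofReal_re]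

theorem framePotential_eq_sum_normSq_mul_conjTranspose (F : Matrix m ι ℂ) :
    framePotential F = ∑ a, ∑ b, normSq ((F * Fᴴ) a b) := by
  rw [framePotential, ← re_trace_mul_conjTranspose, ← re_trace_mul_conjTranspose,
    (isHermitian_conjTranspose_mul_self F).eq, (isHermitian_mul_conjTranspose_self F).eq,
    Matrix.mul_assoc, trace_mul_comm]
  simp only [Matrix.mul_assoc]

theorem sq_re_trace_le_card_mul_framePotential (F : Matrix m ι ℂ) :
    (trace (Fᴴ * F)).re ^ 2 ≤ Fintype.card m * framePotential F := by
  set H := F * Fᴴ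
  have htrace : (trace (Fᴴ * F)).re = ∑ a, (H a a).re := by
    rw [trace_mul_comm, trace, Complex.re_sum]; rfl
  have hdiag : ∑ a, (H a a).re ^ 2 ≤ framePotential F := by
    rw [framePotential_eq_sum_normSq_mul_conjTranspose]
    gcongr with a
    calc (H a a).re ^ 2 ≤ normSq (H a a) := by rw [sq]; exact Complex.re_sq_le_normSq _
      _ ≤ ∑ b, normSq (H a b) :=
        single_le_sum (fun b _ => Complex.normSq_nonneg (H a b)) (mem_univ a)
  calc (trace (Fᴴ * F)).re ^ 2 ≤ Fintype.card m * ∑ a, (H a a).re ^ 2 := by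
        rw [htrace]; exact sq_sum_le_card_mul_sum_sq
    _ ≤ Fintype.card m * framePotential F := by gcongr

theorem card_sq_le_card_mul_framePotential (F : Matrix m ι ℂ)
    (hcol : ∀ i, (Fᴴ * F) i i = 1) :
    (Fintype.card ι : ℝ) ^ 2 ≤ Fintype.card m * framePotential F := by
  simpa [trace, hcol] using sq_re_trace_le_card_mul_framePotential F

theorem trace_sq_mul_diagonal_mul_conjTranspose [DecidableEq m] [DecidableEq ι]
    (F : Matrix m ι ℂ) (d : ι → ℝ) :
    trace ((F * diagonal (fun i => (d i : ℂ)) * Fᴴ) ^ 2) =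
      ((∑ i, ∑ j, d i * d j * normSq ((Fᴴ * F) i j) : ℝ) : ℂ) := by
  set D := diagonal (fun i => (d i : ℂ))
  set G := Fᴴ * F
  have hG (i j) : G j i = star (G i j) := by
    rw [← conjTranspose_apply, (isHermitian_conjTranspose_mul_self F).eq]
  have hcycle : trace ((F * D * Fᴴ) ^ 2) = trace (D * G * (D * G)) := by
    rw [sq, show F * D * Fᴴ * (F * D * Fᴴ) = F * (D * G * D * Fᴴ) by
      simp only [G, Matrix.mul_assoc], trace_mul_comm]
    simp only [G, Matrix.mul_assoc]
  rw [hcycle]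
  simp only [trace, diag_apply, mul_apply, D, diagonal_apply, ite_mul, zero_mul, sum_ite_eq,
    mem_univ, if_true]
  push_cast
  refine sum_congr rfl fun i _ => sum_congr rfl fun j _ => ?_
  rw [hG i j, ← Complex.mul_conj, Complex.star_def]
  ring

end Gram

theorem sum_berWeight_mul_re_trace_sq {m : Type*} [Fintype m] [DecidableEq m] {n : ℕ} (p : ℝ)
    (F : Matrix m (Fin n) ℂ) :
    ∑ ε : Fin n → Bool, berWeight n p ε * (trace ((F * selMat n ε * Fᴴ) ^ 2)).re =
      ∑ i, ∑ j, (if i = j then p else p ^ 2) * normSq ((Fᴴ * F) i j) := by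
  have hsel (ε : Fin n → Bool) :
      selMat n ε = diagonal (fun i => ((if ε i then 1 else 0 : ℝ) : ℂ)) := by
    simp only [selMat, apply_ite Complex.ofReal, Complex.ofReal_one, Complex.ofReal_zero]
  simp_rw [hsel, trace_sq_mul_diagonal_mul_conjTranspose, Complex.ofReal_re, mul_sum]
  rw [sum_comm]
  refine sum_congr rfl fun i _ => ?_
  rw [sum_comm]
  refine sum_congr rfl fun j _ => ?_
  rw [← sum_berWeight_mul_indicator_mul_indicator, sum_mul]
  exact sum_congr rfl fun _ _ => by ring

theorem expMoment_two_eq {m n : ℕ} (p : ℝ) (F : Matrix (Fin m) (Fin n) ℂ)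
    (hcol : ∀ i, (Fᴴ * F) i i = 1) :
    expMoment m n p F 2 = (p ^ 2 * framePotential F + (p - p ^ 2) * n) / n := by
  have hsplit (i j : Fin n) : (if i = j then p else p ^ 2) * normSq ((Fᴴ * F) i j) =
      p ^ 2 * normSq ((Fᴴ * F) i j) + if i = j then p - p ^ 2 else 0 := by
    split_ifs with hij
    · rw [hij, hcol, map_one]; ring
    · ring
  rw [expMoment, sum_berWeight_mul_re_trace_sq]
  simp only [hsplit, sum_add_distrib, ← mul_sum, sum_ite_eq, mem_univ, if_true, sum_const,
    card_univ, Fintype.card_fin, nsmul_eq_mul]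
  rw [framePotential]
  ring

theorem erasure_welch_stmt14_general (m n : ℕ)
    (p : ℝ)
    (hk : 1 < p * n)
    (F : Matrix (Fin m) (Fin n) ℂ)
    (hcol : ∀ i, (Fᴴ * F) i i = 1) :
    let k : ℝ := p * n
    (k / m - k / n) / (k - 1) ≤ (expMoment m n p F 2 / p - 1) / (k - 1) := by
  intro k
  have hp : 0 < p := pos_of_mul_pos_left (by linarith) n.cast_nonneg
  have hn : (0 : ℝ) < n := pos_of_mul_pos_right (by linarith) hp.le
  have hwelch : (n : ℝ) ^ 2 / m ≤ framePotential F :=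
    div_le_of_le_mul₀ m.cast_nonneg (framePotential_nonneg F) <| by
      simpa [mul_comm] using card_sq_le_card_mul_framePotential F hcol
  have hm₂ : expMoment m n p F 2 / p - 1 = p * framePotential F / n - p := by
    rw [expMoment_two_eq p F hcol]
    field_simp
    ring
  rw [div_le_div_iff_of_pos_right (by linarith), hm₂]
  calc k / m - k / n = p * ((n : ℝ) ^ 2 / m) / n - p := by
        simp only [k]
        field_simp
    _ ≤ p * framePotential F / n - p := by gcongr

theorem erasure_welch_stmt14 (m n : ℕ) (hm : 1 ≤ m) (hmn : m ≤ n)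
    (p : ℝ) (hp0 : 0 < p) (hp1 : p ≤ 1)
    (hk : 1 < p * n)
    (F : Matrix (Fin m) (Fin n) ℂ)
    (hcol : ∀ i, (Fᴴ * F) i i = 1) :
    let k : ℝ := p * n
    (k / m - k / n) / (k - 1) ≤ (expMoment m n p F 2 / p - 1) / (k - 1) :=
  erasure_welch_stmt14_general m n p hk F hcol
end
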